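/- arXiv:2212.02107 — 3 statements merged into one kernel-verified Lean document; each statement's English description precedes it below -/
import Mathlib

section
/- Let Θ⁰ be a true parameter configuration with row groups [G₀] and column groups [H₀] and suppose the group-gap condition holds: for all h₁ ≠ h₂ in [H₀], ‖θ^{c0}_{h₁} − θ^{c0}_{h₂}‖² + max_{g∈[G₀]} |α⁰_{gh₁} − α⁰_{gh₂}|² ≥ c_gap > 0. Let θ be any parameter configuration with column groups [H] and suppose d_H(θ, θ⁰) < η where η < c_gap·c_π/4 and each row group proportion is at least c_π. Then the sets A_η(θ, h₀) = {h ∈ [H] : ‖θ^c_h − θ^{c0}_{h₀}‖² + N₁^{-1}Σᵢ|α_{gᵢh} − α⁰_{gᵢ⁰h₀}|² ≤ η}, for h₀ ∈ [H₀], are pairwise disjoint. -/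
open Finset

/-- Theorem 3(i), disjointness half: under the group-gap condition with constant
`c_gap`, minimum row-group proportion `c_π`, and Hausdorff distance
`d_H(θ, θ⁰) < η` where `η < c_gap · c_π / 4`, the neighbourhood sets
`A_η(θ, h₀) = {h : D h h₀ ≤ η}` for distinct true column labels `h₀` are
pairwise disjoint.  Here `D h h₀ = ‖θᶜ_h − θᶜ⁰_{h₀}‖² + N₁⁻¹ ∑ᵢ |α_{gᵢ h} − α⁰_{gᵢ⁰ h₀}|²`. -/
theorem neighbourhood_sets_pairwise_disjoint
    {N₁ G₀ H₀ H d : ℕ} [NeZero N₁] [NeZero G₀] [NeZero H₀] [NeZero H]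
    (g0 : Fin N₁ → Fin G₀)
    (θc0 : Fin H₀ → EuclideanSpace ℝ (Fin d)) (α0 : Fin G₀ → Fin H₀ → ℝ)
    (θc : Fin H → EuclideanSpace ℝ (Fin d)) (αc : Fin N₁ → Fin H → ℝ)
    (cgap cπ η : ℝ) (hcgap : 0 < cgap) (hcπ : 0 < cπ)
    (D : Fin H → Fin H₀ → ℝ)
    (hD : ∀ (h : Fin H) (h₀ : Fin H₀),
      D h h₀ = ‖θc h - θc0 h₀‖ ^ 2 +
        (N₁ : ℝ)⁻¹ * ∑ i, |αc i h - α0 (g0 i) h₀| ^ 2)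
    (hgap : ∀ h₁ h₂ : Fin H₀, h₁ ≠ h₂ →
      cgap ≤ ‖θc0 h₁ - θc0 h₂‖ ^ 2 +
        Finset.univ.sup' Finset.univ_nonempty
          (fun g : Fin G₀ => |α0 g h₁ - α0 g h₂| ^ 2))
    (hprop : ∀ a : Fin G₀,
      cπ * N₁ ≤ ((Finset.univ.filter (fun i => g0 i = a)).card : ℝ))
    (hdH₁ : ∀ h₀ : Fin H₀, ∃ h : Fin H, D h h₀ < η)
    (hdH₂ : ∀ h : Fin H, ∃ h₀ : Fin H₀, D h h₀ < η)
    (hη : η < cgap * cπ / 4) :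
    ∀ h₀ h₀' : Fin H₀, h₀ ≠ h₀' →
      ∀ h : Fin H, D h h₀ ≤ η → ¬ D h h₀' ≤ η := by
  intro h₀ h₀' hne h hDh hDh'
  have hN : (0:ℝ) < (N₁:ℝ) := by exact_mod_cast (NeZero.pos N₁)
  have hDh1 : ‖θc h - θc0 h₀‖ ^ 2 +
      (N₁ : ℝ)⁻¹ * ∑ i, |αc i h - α0 (g0 i) h₀| ^ 2 ≤ η := by rw [← hD]; exact hDh
  have hDh2 : ‖θc h - θc0 h₀'‖ ^ 2 +
      (N₁ : ℝ)⁻¹ * ∑ i, |αc i h - α0 (g0 i) h₀'| ^ 2 ≤ η := by rw [← hD]; exact hDh'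
  have hS0 : (0:ℝ) ≤ (N₁ : ℝ)⁻¹ * ∑ i, |αc i h - α0 (g0 i) h₀| ^ 2 :=
    mul_nonneg (by positivity) (Finset.sum_nonneg fun i _ => sq_nonneg _)
  have hS'0 : (0:ℝ) ≤ (N₁ : ℝ)⁻¹ * ∑ i, |αc i h - α0 (g0 i) h₀'| ^ 2 :=
    mul_nonneg (by positivity) (Finset.sum_nonneg fun i _ => sq_nonneg _)
  -- cπ ≤ 1
  have hcπ1 : cπ ≤ 1 := by
    have a : Fin G₀ := Classical.arbitrary (Fin G₀)
    have h1 := hprop a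
    have h2 : ((Finset.univ.filter (fun i => g0 i = a)).card : ℝ) ≤ (N₁ : ℝ) := by
      exact_mod_cast (Finset.card_le_card (Finset.filter_subset _ _)).trans
        (le_of_eq (Finset.card_univ.trans (Fintype.card_fin N₁)))
    nlinarith
  -- the sup witness
  obtain ⟨g, -, hg⟩ := Finset.exists_mem_eq_sup' (Finset.univ_nonempty)
    (fun g : Fin G₀ => |α0 g h₀ - α0 g h₀'| ^ 2)
  have hM0 : (0:ℝ) ≤ |α0 g h₀ - α0 g h₀'| ^ 2 := sq_nonneg _
  have hgap' : cgap ≤ ‖θc0 h₀ - θc0 h₀'‖ ^ 2 + |α0 g h₀ - α0 g h₀'| ^ 2 := by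
    have hh := hgap h₀ h₀' hne
    rw [hg] at hh
    exact hh
  -- norm triangle squared
  have htri : ‖θc0 h₀ - θc0 h₀'‖ ^ 2 ≤
      2 * ‖θc h - θc0 h₀‖ ^ 2 + 2 * ‖θc h - θc0 h₀'‖ ^ 2 := by
    have h1 : ‖θc0 h₀ - θc0 h₀'‖ ≤ ‖θc h - θc0 h₀‖ + ‖θc h - θc0 h₀'‖ := by
      calc ‖θc0 h₀ - θc0 h₀'‖ = ‖(θc0 h₀ - θc h) + (θc h - θc0 h₀')‖ := by
            congr 1; abel
        _ ≤ ‖θc0 h₀ - θc h‖ + ‖θc h - θc0 h₀'‖ := norm_add_le _ _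
        _ = ‖θc h - θc0 h₀‖ + ‖θc h - θc0 h₀'‖ := by rw [norm_sub_rev]
    have h2 : ‖θc0 h₀ - θc0 h₀'‖ ^ 2 ≤ (‖θc h - θc0 h₀‖ + ‖θc h - θc0 h₀'‖) ^ 2 :=
      pow_le_pow_left₀ (norm_nonneg _) h1 2
    nlinarith [sq_nonneg (‖θc h - θc0 h₀‖ - ‖θc h - θc0 h₀'‖)]
  -- α part
  have hαsum : ((Finset.univ.filter (fun i => g0 i = g)).card : ℝ) *
      |α0 g h₀ - α0 g h₀'| ^ 2 ≤
      ∑ i, (2 * |αc i h - α0 (g0 i) h₀| ^ 2 + 2 * |αc i h - α0 (g0 i) h₀'| ^ 2) := by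
    calc ((Finset.univ.filter (fun i => g0 i = g)).card : ℝ) * |α0 g h₀ - α0 g h₀'| ^ 2
        = ∑ _i ∈ Finset.univ.filter (fun i => g0 i = g), |α0 g h₀ - α0 g h₀'| ^ 2 := by
          rw [Finset.sum_const, nsmul_eq_mul]
      _ ≤ ∑ i ∈ Finset.univ.filter (fun i => g0 i = g),
            (2 * |αc i h - α0 (g0 i) h₀| ^ 2 + 2 * |αc i h - α0 (g0 i) h₀'| ^ 2) := by
          apply Finset.sum_le_sum
          intro i hi
          have hgi : g0 i = g := by simpa using (Finset.mem_filter.mp hi).2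
          rw [hgi]
          have h1 : |α0 g h₀ - α0 g h₀'| ≤ |αc i h - α0 g h₀| + |αc i h - α0 g h₀'| := by
            calc |α0 g h₀ - α0 g h₀'|
                = |(αc i h - α0 g h₀') - (αc i h - α0 g h₀)| := by congr 1; ring
              _ ≤ |αc i h - α0 g h₀'| + |αc i h - α0 g h₀| := abs_sub _ _
              _ = |αc i h - α0 g h₀| + |αc i h - α0 g h₀'| := by ring
          have h2 : |α0 g h₀ - α0 g h₀'| ^ 2 ≤
              (|αc i h - α0 g h₀| + |αc i h - α0 g h₀'|) ^ 2 :=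
            pow_le_pow_left₀ (abs_nonneg _) h1 2
          nlinarith [sq_nonneg (|αc i h - α0 g h₀| - |αc i h - α0 g h₀'|)]
      _ ≤ ∑ i, (2 * |αc i h - α0 (g0 i) h₀| ^ 2 + 2 * |αc i h - α0 (g0 i) h₀'| ^ 2) := by
          apply Finset.sum_le_sum_of_subset_of_nonneg (Finset.filter_subset _ _)
          intro i _ _
          positivity
  have hαpart : cπ * |α0 g h₀ - α0 g h₀'| ^ 2 ≤
      2 * ((N₁ : ℝ)⁻¹ * ∑ i, |αc i h - α0 (g0 i) h₀| ^ 2) +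
      2 * ((N₁ : ℝ)⁻¹ * ∑ i, |αc i h - α0 (g0 i) h₀'| ^ 2) := by
    have h1 : cπ * (N₁:ℝ) * |α0 g h₀ - α0 g h₀'| ^ 2 ≤
        ((Finset.univ.filter (fun i => g0 i = g)).card : ℝ) * |α0 g h₀ - α0 g h₀'| ^ 2 :=
      mul_le_mul_of_nonneg_right (hprop g) hM0
    have h2 : (∑ i, (2 * |αc i h - α0 (g0 i) h₀| ^ 2 + 2 * |αc i h - α0 (g0 i) h₀'| ^ 2))
        = (N₁:ℝ) * (2 * ((N₁ : ℝ)⁻¹ * ∑ i, |αc i h - α0 (g0 i) h₀| ^ 2) +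
            2 * ((N₁ : ℝ)⁻¹ * ∑ i, |αc i h - α0 (g0 i) h₀'| ^ 2)) := by
      rw [Finset.sum_add_distrib, ← Finset.mul_sum, ← Finset.mul_sum]
      field_simp
    have h3 := h1.trans (hαsum.trans_eq h2)
    have h4 : cπ * (N₁:ℝ) * |α0 g h₀ - α0 g h₀'| ^ 2
        = (N₁:ℝ) * (cπ * |α0 g h₀ - α0 g h₀'| ^ 2) := by ring
    rw [h4] at h3
    exact le_of_mul_le_mul_left h3 hN
  -- combine
  have hT0 : (0:ℝ) ≤ ‖θc0 h₀ - θc0 h₀'‖ ^ 2 := sq_nonneg _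
  have hc1 : cπ * cgap ≤ cπ * (‖θc0 h₀ - θc0 h₀'‖ ^ 2 + |α0 g h₀ - α0 g h₀'| ^ 2) :=
    mul_le_mul_of_nonneg_left hgap' hcπ.le
  have hc2 : cπ * ‖θc0 h₀ - θc0 h₀'‖ ^ 2 ≤ ‖θc0 h₀ - θc0 h₀'‖ ^ 2 :=
    mul_le_of_le_one_left hT0 hcπ1
  nlinarith [sq_nonneg (‖θc h - θc0 h₀‖), sq_nonneg (‖θc h - θc0 h₀'‖)]
end

section
/- In the setting of the previous statement (with d_H(θ, θ⁰) < η and η < c_gap·c_π/4), every h ∈ [H] belongs to A_η(θ, h₀) for some h₀ ∈ [H₀]; combined with pairwise disjointness, the sets {A_η(θ, h₀) : h₀ ∈ [H₀]} form a partition of [H]. -/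
open Finset

/-- Theorem 3(i): under the group-gap condition with constant `c_gap`, minimum
row-group proportion `c_π`, and Hausdorff distance `d_H(θ, θ⁰) < η` where
`η < c_gap · c_π / 4`, every `h ∈ [H]` lies in exactly one of the neighbourhood
sets `A_η(θ, h₀) = {h : D h h₀ ≤ η}`, `h₀ ∈ [H₀]`; i.e. these sets partition `[H]`.  Here `D h h₀ = ‖θᶜ_h − θᶜ⁰_{h₀}‖² + N₁⁻¹ ∑ᵢ |α_{gᵢ h} − α⁰_{gᵢ⁰ h₀}|²`. -/
theorem neighbourhood_sets_partition
    {N₁ G₀ H₀ H d : ℕ} [NeZero N₁] [NeZero G₀] [NeZero H₀] [NeZero H]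
    (g0 : Fin N₁ → Fin G₀)
    (θc0 : Fin H₀ → EuclideanSpace ℝ (Fin d)) (α0 : Fin G₀ → Fin H₀ → ℝ)
    (θc : Fin H → EuclideanSpace ℝ (Fin d)) (αc : Fin N₁ → Fin H → ℝ)
    (cgap cπ η : ℝ) (hcgap : 0 < cgap) (hcπ : 0 < cπ)
    (D : Fin H → Fin H₀ → ℝ)
    (hD : ∀ (h : Fin H) (h₀ : Fin H₀),
      D h h₀ = ‖θc h - θc0 h₀‖ ^ 2 +
        (N₁ : ℝ)⁻¹ * ∑ i, |αc i h - α0 (g0 i) h₀| ^ 2)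
    (hgap : ∀ h₁ h₂ : Fin H₀, h₁ ≠ h₂ →
      cgap ≤ ‖θc0 h₁ - θc0 h₂‖ ^ 2 +
        Finset.univ.sup' Finset.univ_nonempty
          (fun g : Fin G₀ => |α0 g h₁ - α0 g h₂| ^ 2))
    (hprop : ∀ a : Fin G₀,
      cπ * N₁ ≤ ((Finset.univ.filter (fun i => g0 i = a)).card : ℝ))
    (hdH₁ : ∀ h₀ : Fin H₀, ∃ h : Fin H, D h h₀ < η)
    (hdH₂ : ∀ h : Fin H, ∃ h₀ : Fin H₀, D h h₀ < η)
    (hη : η < cgap * cπ / 4) :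
    ∀ h : Fin H, ∃! h₀ : Fin H₀, D h h₀ ≤ η := by
  intro h
  have hN₁pos : (0 : ℝ) < (N₁ : ℝ) := by
    exact_mod_cast Nat.pos_of_ne_zero (NeZero.ne N₁)
  -- cπ ≤ 1
  have hcπ1 : cπ ≤ 1 := by
    have h1 := hprop (Classical.arbitrary (Fin G₀))
    have h2 : ((Finset.univ.filter
        (fun i => g0 i = Classical.arbitrary (Fin G₀))).card : ℝ) ≤ (N₁ : ℝ) := by
      have := Finset.card_filter_le (Finset.univ : Finset (Fin N₁))
        (fun i => g0 i = Classical.arbitrary (Fin G₀))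
      simp only [Finset.card_univ, Fintype.card_fin] at this
      exact_mod_cast this
    nlinarith
  obtain ⟨h₀, hh₀⟩ := hdH₂ h
  refine ⟨h₀, hh₀.le, ?_⟩
  intro h₁ hh₁
  by_contra hne
  -- key: for any two distinct h₁ h₂ with D h hⱼ ≤ η, contradiction
  have key : ∀ x y : Fin H₀, x ≠ y → D h x ≤ η → D h y ≤ η → False := by
    intro x y hxy hx hy
    -- sup attained
    obtain ⟨g, -, hg⟩ := Finset.exists_mem_eq_sup' (Finset.univ_nonempty)
      (fun g : Fin G₀ => |α0 g x - α0 g y| ^ 2)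
    set M := |α0 g x - α0 g y| ^ 2 with hM
    have hMnn : 0 ≤ M := hM ▸ sq_nonneg _
    have hgapxy := hgap x y hxy
    rw [hg] at hgapxy
    set ax := ‖θc h - θc0 x‖ ^ 2 with hax
    set ay := ‖θc h - θc0 y‖ ^ 2 with hay
    set Sx := (N₁ : ℝ)⁻¹ * ∑ i, |αc i h - α0 (g0 i) x| ^ 2 with hSx
    set Sy := (N₁ : ℝ)⁻¹ * ∑ i, |αc i h - α0 (g0 i) y| ^ 2 with hSy
    have hDx : ax + Sx ≤ η := by rw [← hD h x]; exact hx
    have hDy : ay + Sy ≤ η := by rw [← hD h y]; exact hy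
    clear_value M ax ay Sx Sy
    have haxnn : 0 ≤ ax := hax ▸ sq_nonneg _
    have haynn : 0 ≤ ay := hay ▸ sq_nonneg _
    -- triangle for θ
    have hθ : ‖θc0 x - θc0 y‖ ^ 2 ≤ 2 * ax + 2 * ay := by
      have ht : ‖θc0 x - θc0 y‖ ≤ ‖θc h - θc0 x‖ + ‖θc h - θc0 y‖ := by
        have := norm_sub_le_norm_sub_add_norm_sub (θc0 x) (θc h) (θc0 y)
        calc ‖θc0 x - θc0 y‖ ≤ ‖θc0 x - θc h‖ + ‖θc h - θc0 y‖ := this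
          _ = ‖θc h - θc0 x‖ + ‖θc h - θc0 y‖ := by rw [norm_sub_rev]
      have h0x : (0:ℝ) ≤ ‖θc0 x - θc0 y‖ := norm_nonneg _
      rw [hax, hay]
      nlinarith [mul_self_le_mul_self h0x ht,
        sq_nonneg (‖θc h - θc0 x‖ - ‖θc h - θc0 y‖)]
    -- per-index bound on the filtered set
    have hpt : ∀ i ∈ Finset.univ.filter (fun i => g0 i = g),
        M / 2 ≤ |αc i h - α0 (g0 i) x| ^ 2 + |αc i h - α0 (g0 i) y| ^ 2 := by
      intro i hi
      have hgi : g0 i = g := (Finset.mem_filter.mp hi).2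
      rw [hgi, hM]
      have ht : |α0 g x - α0 g y| ≤ |αc i h - α0 g x| + |αc i h - α0 g y| := by
        have : α0 g x - α0 g y = (αc i h - α0 g y) - (αc i h - α0 g x) := by ring
        rw [this]
        calc |(αc i h - α0 g y) - (αc i h - α0 g x)|
            ≤ |αc i h - α0 g y| + |αc i h - α0 g x| := abs_sub _ _
          _ = |αc i h - α0 g x| + |αc i h - α0 g y| := by ring
      nlinarith [mul_self_le_mul_self (abs_nonneg (α0 g x - α0 g y)) ht,
        sq_nonneg (|αc i h - α0 g x| - |αc i h - α0 g y|)]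
    -- sum bound
    have hsum : ((Finset.univ.filter (fun i => g0 i = g)).card : ℝ) * (M / 2) ≤
        ∑ i, (|αc i h - α0 (g0 i) x| ^ 2 + |αc i h - α0 (g0 i) y| ^ 2) := by
      calc ((Finset.univ.filter (fun i => g0 i = g)).card : ℝ) * (M / 2)
          = ∑ _i ∈ Finset.univ.filter (fun i => g0 i = g), (M / 2) := by
            rw [Finset.sum_const, nsmul_eq_mul]
        _ ≤ ∑ i ∈ Finset.univ.filter (fun i => g0 i = g),
            (|αc i h - α0 (g0 i) x| ^ 2 + |αc i h - α0 (g0 i) y| ^ 2) :=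
            Finset.sum_le_sum hpt
        _ ≤ ∑ i, (|αc i h - α0 (g0 i) x| ^ 2 + |αc i h - α0 (g0 i) y| ^ 2) := by
            apply Finset.sum_le_sum_of_subset_of_nonneg (Finset.filter_subset _ _)
            intro i _ _
            positivity
    have hSsum : ∑ i, (|αc i h - α0 (g0 i) x| ^ 2 + |αc i h - α0 (g0 i) y| ^ 2)
        = (N₁ : ℝ) * (Sx + Sy) := by
      rw [Finset.sum_add_distrib, hSx, hSy]
      field_simp
    have hcard := hprop g
    -- combine: cπ * M / 2 ≤ Sx + Sy
    have hMS : cπ * M / 2 ≤ Sx + Sy := by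
      have h1 : cπ * (N₁:ℝ) * (M / 2) ≤
          ((Finset.univ.filter (fun i => g0 i = g)).card : ℝ) * (M / 2) := by
        apply mul_le_mul_of_nonneg_right hcard; positivity
      rw [hSsum] at hsum
      have h2 := h1.trans hsum
      rw [show cπ * (N₁:ℝ) * (M / 2) = (N₁:ℝ) * (cπ * M / 2) by ring] at h2
      exact le_of_mul_le_mul_left h2 hN₁pos
    have hcg : cgap ≤ 2 * ax + 2 * ay + M := by linarith
    have h2 : cπ * cgap ≤ 2 * (cπ * ax) + 2 * (cπ * ay) + cπ * M := by
      have := mul_le_mul_of_nonneg_left hcg hcπ.le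
      linarith only [this]
    have h3 : cπ * ax + cπ * ay ≤ ax + ay := by
      have := mul_le_mul_of_nonneg_right hcπ1 (add_nonneg haxnn haynn)
      linarith only [this]
    linarith only [h2, h3, hMS, hDx, hDy, hη, hcπ, hcgap]
  exact key h₁ h₀ hne hh₁ hh₀.le
end

section
/- Let â, a⁰ be assignments [N] → [H] and suppose the parameters attached to the estimated groups satisfy: for every j, ‖θ̂_{â(j)} − θ⁰_{a⁰(j)}‖² ≤ η, and the true group centers satisfy ‖θ⁰_{h₁} − θ⁰_{h₂}‖² ≥ c_gap for h₁ ≠ h₂ with 4η < c_gap. Then for every estimated group label ĥ ∈ [H] with â^{-1}(ĥ) ≠ ∅, there exists a unique true label h ∈ [H₀] such that â^{-1}(ĥ) ⊆ (a⁰)^{-1}(h); that is, each estimated group is contained in exactly one true group. -/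
/-- Combinatorial core of Theorem 3(iii): if every node's estimated group
parameter is `η`-close (in squared norm) to its true group center, distinct
true centers are `c_gap`-separated with `4η < c_gap`, then every nonempty
estimated group is contained in exactly one true group. -/
theorem estimated_groups_refine_true_groups
    {N H H₀ : ℕ} {V : Type*} [NormedAddCommGroup V]
    (ahat : Fin N → Fin H) (a0 : Fin N → Fin H₀)
    (θhat : Fin H → V) (θ0 : Fin H₀ → V)
    (cgap η : ℝ)
    (hclose : ∀ j : Fin N, ‖θhat (ahat j) - θ0 (a0 j)‖ ^ 2 ≤ η)
    (hgap : ∀ h₁ h₂ : Fin H₀, h₁ ≠ h₂ → cgap ≤ ‖θ0 h₁ - θ0 h₂‖ ^ 2)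
    (hη : 4 * η < cgap) :
    ∀ hh : Fin H, (∃ j : Fin N, ahat j = hh) →
      ∃! h : Fin H₀, ∀ j : Fin N, ahat j = hh → a0 j = h := by
  rintro hh ⟨j₀, hj₀⟩
  have key : ∀ j : Fin N, ahat j = hh → a0 j = a0 j₀ := by
    intro j hj
    by_contra hne
    have hgap' := hgap _ _ hne
    have h1 := hclose j
    have h2 := hclose j₀
    rw [hj] at h1; rw [hj₀] at h2
    have hη0 : 0 ≤ η := le_trans (by positivity) h1
    have hsq : ∀ x : V, ‖x‖ ^ 2 ≤ η → ‖x‖ ≤ Real.sqrt η := by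
      intro x hx
      have := Real.sqrt_le_sqrt hx
      rwa [Real.sqrt_sq (norm_nonneg x)] at this
    have ha := hsq _ h1
    have hb := hsq _ h2
    have htri : ‖θ0 (a0 j) - θ0 (a0 j₀)‖ ≤ 2 * Real.sqrt η := by
      calc ‖θ0 (a0 j) - θ0 (a0 j₀)‖
          = ‖(θhat hh - θ0 (a0 j₀)) - (θhat hh - θ0 (a0 j))‖ := by rw [sub_sub_sub_cancel_left]
        _ ≤ ‖θhat hh - θ0 (a0 j₀)‖ + ‖θhat hh - θ0 (a0 j)‖ := norm_sub_le _ _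
        _ ≤ Real.sqrt η + Real.sqrt η := add_le_add hb ha
        _ = 2 * Real.sqrt η := by ring
    have hsqle : ‖θ0 (a0 j) - θ0 (a0 j₀)‖ ^ 2 ≤ (2 * Real.sqrt η) ^ 2 := by
      apply sq_le_sq' _ htri
      linarith [norm_nonneg (θ0 (a0 j) - θ0 (a0 j₀))]
    rw [mul_pow, Real.sq_sqrt hη0] at hsqle
    linarith
  exact ⟨a0 j₀, key, fun h hh' => (hh' j₀ hj₀).symm⟩
end
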